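/- The Chang MV-effect algebra E = {0, a, 2a, 3a, …, (3a)', (2a)', a', 1} is sharply orthocomplete but not complete (indeed not Archimedean). -/

import Mathlib

universe u v

/-- An effect algebra: a partial algebra `(E; ⊕, 0, 1)` with `0 ≠ 1`, where `⊕` is
partially defined (domain `D`), commutative and associative where defined, every
element has a unique orthosupplement (`compl`, skolemizing axiom (Eiii)), and
`1 ⊕ x` defined implies `x = 0`. -/
structure EffectAlgebra (E : Type u) where
  D : E → E → Prop
  oplus : E → E → E
  zero : E
  one : E
  zero_ne_one : zero ≠ one
  D_comm : ∀ x y, D x y → D y x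
  oplus_comm : ∀ x y, D x y → oplus x y = oplus y x
  assoc : ∀ x y z, D x y → D (oplus x y) z →
      D y z ∧ D x (oplus y z) ∧ oplus (oplus x y) z = oplus x (oplus y z)
  assoc' : ∀ x y z, D y z → D x (oplus y z) →
      D x y ∧ D (oplus x y) z ∧ oplus (oplus x y) z = oplus x (oplus y z)
  compl : E → E
  D_compl : ∀ x, D x (compl x)
  oplus_compl : ∀ x, oplus x (compl x) = one
  compl_unique : ∀ x y, D x y → oplus x y = one → y = compl x
  one_max : ∀ x, D one x → x = zero

namespace EffectAlgebra

variable {E : Type u} (A : EffectAlgebra E)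

/-- The induced order: `x ≤ y` iff `x ⊕ z = y` for some `z`. -/
def le (x y : E) : Prop := ∃ z, A.D x z ∧ A.oplus x z = y

def IsLB (S : Set E) (m : E) : Prop := ∀ x ∈ S, A.le m x
def IsUB (S : Set E) (m : E) : Prop := ∀ x ∈ S, A.le x m

/-- `m` is the infimum of `S` computed within the subposet `P`. -/
def IsInfIn (P : Set E) (S : Set E) (m : E) : Prop :=
  m ∈ P ∧ A.IsLB S m ∧ ∀ z ∈ P, A.IsLB S z → A.le z m

/-- `m` is the supremum of `S` computed within the subposet `P`. -/
def IsSupIn (P : Set E) (S : Set E) (m : E) : Prop :=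
  m ∈ P ∧ A.IsUB S m ∧ ∀ z ∈ P, A.IsUB S z → A.le m z

/-- `w` is sharp iff the meet `w ∧ w'` exists in `E` and equals `0`. -/
def Sharp (w : E) : Prop := A.IsInfIn Set.univ {w, A.compl w} A.zero

/-- The set `S(E)` of sharp elements. -/
def sharpSet : Set E := {w | A.Sharp w}

def HasMeet (x y : E) : Prop := ∃ m, A.IsInfIn Set.univ {x, y} m
def HasJoin (x y : E) : Prop := ∃ j, A.IsSupIn Set.univ {x, y} j

/-- Every `x` has a least sharp element above it, which is the infimum of the sharp
elements above `x` both in `E` and in `S(E)`. -/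
def SharplyDominating : Prop :=
  ∀ x : E, ∃ w, A.Sharp w ∧ A.le x w ∧
    A.IsInfIn Set.univ {v | A.Sharp v ∧ A.le x v} w ∧
    A.IsInfIn A.sharpSet {v | A.Sharp v ∧ A.le x v} w

/-- Sharply dominating, and `x ∧ w` exists for every `x ∈ E`, `w ∈ S(E)`. -/
def SDominating : Prop :=
  A.SharplyDominating ∧ ∀ x w : E, A.Sharp w → A.HasMeet x w

end EffectAlgebra

/-- `SumDef A l s` : the orthosum of the finite list `l` is defined and equals `s`. -/
inductive EffectAlgebra.SumDef {E : Type u} (A : EffectAlgebra E) : List E → E → Prop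
  | nil : EffectAlgebra.SumDef A [] A.zero
  | cons {x : E} {l : List E} {s : E} : EffectAlgebra.SumDef A l s → A.D x s →
      EffectAlgebra.SumDef A (x :: l) (A.oplus x s)

namespace EffectAlgebra

variable {E : Type u} (A : EffectAlgebra E)

/-- A family is orthogonal iff every finite subfamily has a defined orthosum. -/
def Orthogonal {ι : Type v} (x : ι → E) : Prop :=
  ∀ l : List ι, l.Nodup → ∃ s, A.SumDef (l.map x) s

/-- The set of finite partial orthosums of a family. -/
def finiteSums {ι : Type v} (x : ι → E) : Set E :=
  {s | ∃ l : List ι, l.Nodup ∧ A.SumDef (l.map x) s}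

/-- `v = ⊕ x` : the family is orthogonal and `v` is the supremum in `E` of all
finite partial orthosums. -/
def HasOrthoSum {ι : Type v} (x : ι → E) (v : E) : Prop :=
  A.Orthogonal x ∧ A.IsSupIn Set.univ (A.finiteSums x) v

/-- Every family dominated elementwise by an orthogonal family of sharp
elements has an orthosum. -/
def SharplyOrthocomplete : Prop :=
  ∀ (ι : Type u) (x w : ι → E), (∀ k, A.Sharp (w k)) → A.Orthogonal w →
    (∀ k, A.le (x k) (w k)) → ∃ v, A.HasOrthoSum x v

/-- `c` is central: for every `y` the meets `y ∧ c`, `y ∧ c'` exist and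
`y = (y ∧ c) ∨ (y ∧ c')`. -/
def Central (c : E) : Prop :=
  ∀ y : E, ∃ m₁ m₂, A.IsInfIn Set.univ {y, c} m₁ ∧
    A.IsInfIn Set.univ {y, A.compl c} m₂ ∧ A.IsSupIn Set.univ {m₁, m₂} y

/-- The center `C(E)`. -/
def centerSet : Set E := {c | A.Central c}

def CentrallyDominating : Prop :=
  ∀ x : E, ∃ c, A.Central c ∧ A.le x c ∧
    A.IsInfIn Set.univ {d | A.Central d ∧ A.le x d} c ∧
    A.IsInfIn A.centerSet {d | A.Central d ∧ A.le x d} c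

def CentrallyOrthocomplete : Prop :=
  ∀ (ι : Type u) (x c : ι → E), (∀ k, A.Central (c k)) → A.Orthogonal c →
    (∀ k, A.le (x k) (c k)) → ∃ v, A.HasOrthoSum x v

/-- `P` is bifull in `E`: for `S ⊆ P`, the join of `S` in `P` exists iff the join
of `S` in `E` exists, and then they coincide. -/
def Bifull (P : Set E) : Prop :=
  ∀ S ⊆ P, (∀ s, A.IsSupIn P S s → A.IsSupIn Set.univ S s) ∧
    (∀ s, A.IsSupIn Set.univ S s → A.IsSupIn P S s)

/-- The subposet `P` is a complete lattice: every subset of `P` has a supremum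
(and an infimum) computed within `P`. -/
def CompleteIn (P : Set E) : Prop :=
  ∀ S ⊆ P, (∃ s, A.IsSupIn P S s) ∧ (∃ m, A.IsInfIn P S m)

/-- `E` is a complete lattice. -/
def Complete : Prop :=
  ∀ S : Set E, (∃ s, A.IsSupIn Set.univ S s) ∧ (∃ m, A.IsInfIn Set.univ S m)

/-- The induced order of `E` is a lattice. -/
def LatticeOrdered : Prop := ∀ x y : E, A.HasMeet x y ∧ A.HasJoin x y

/-- `x ↔ y` : `x ∨ y = x ⊕ (y ⊖ (x ∧ y))`. -/
def Compatible (x y : E) : Prop :=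
  ∃ m j z, A.IsInfIn Set.univ {x, y} m ∧ A.IsSupIn Set.univ {x, y} j ∧
    A.D m z ∧ A.oplus m z = y ∧ A.D x z ∧ A.oplus x z = j

/-- An MV-effect algebra: a lattice effect algebra all of whose pairs of elements
are compatible. -/
def MV : Prop := A.LatticeOrdered ∧ ∀ x y : E, A.Compatible x y

/-- `nx = x ⊕ ⋯ ⊕ x` (`n` times) is defined. -/
def nTimesDef (n : ℕ) (x : E) : Prop := ∃ s, A.SumDef (List.replicate n x) s

/-- `ord x < ∞` for every nonzero `x`. -/
def IsArchimedean : Prop := ∀ x : E, x ≠ A.zero → ∃ n : ℕ, ¬ A.nTimesDef n x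

def Atom (a : E) : Prop := a ≠ A.zero ∧ ∀ b, A.le b a → b = A.zero ∨ b = a

def Atomic : Prop := ∀ x : E, x ≠ A.zero → ∃ a, A.Atom a ∧ A.le a x

/-- The subposet `P` (closed under `'`) is an orthomodular lattice. -/
def OrthomodularIn (P : Set E) : Prop :=
  (∀ x ∈ P, ∀ y ∈ P, (∃ m, A.IsInfIn P {x, y} m) ∧ (∃ j, A.IsSupIn P {x, y} j)) ∧
  A.zero ∈ P ∧ A.one ∈ P ∧ (∀ x ∈ P, A.compl x ∈ P) ∧
  (∀ x ∈ P, A.IsInfIn P {x, A.compl x} A.zero ∧ A.IsSupIn P {x, A.compl x} A.one) ∧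
  (∀ x ∈ P, ∀ y ∈ P, A.le x y →
    ∃ m, A.IsInfIn P {y, A.compl x} m ∧ A.IsSupIn P {x, m} y)

def DistributiveIn (P : Set E) : Prop :=
  ∀ x ∈ P, ∀ y ∈ P, ∀ z ∈ P, ∀ jyz mxy mxz m : E,
    A.IsSupIn P {y, z} jyz → A.IsInfIn P {x, y} mxy → A.IsInfIn P {x, z} mxz →
    A.IsInfIn P {x, jyz} m → A.IsSupIn P {mxy, mxz} m

/-- The subposet `P` is a Boolean algebra (complemented distributive lattice with
bounds, complement given by `'`). -/
def BooleanIn (P : Set E) : Prop :=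
  (∀ x ∈ P, ∀ y ∈ P, (∃ m, A.IsInfIn P {x, y} m) ∧ (∃ j, A.IsSupIn P {x, y} j)) ∧
  A.zero ∈ P ∧ A.one ∈ P ∧ (∀ x ∈ P, A.compl x ∈ P) ∧
  (∀ x ∈ P, A.IsInfIn P {x, A.compl x} A.zero ∧ A.IsSupIn P {x, A.compl x} A.one) ∧
  A.DistributiveIn P

/-- A block: a maximal set of pairwise compatible elements. -/
def Block (M : Set E) : Prop :=
  (∀ x ∈ M, ∀ y ∈ M, A.Compatible x y) ∧
  ∀ N : Set E, M ⊆ N → (∀ x ∈ N, ∀ y ∈ N, A.Compatible x y) → N = M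

def AtomIn (M : Set E) (a : E) : Prop :=
  a ∈ M ∧ a ≠ A.zero ∧ ∀ b ∈ M, A.le b a → b = A.zero ∨ b = a

def AtomicIn (M : Set E) : Prop :=
  ∀ x ∈ M, x ≠ A.zero → ∃ a, A.AtomIn M a ∧ A.le a x

end EffectAlgebra

/-!
The only sharp elements of the Chang algebra are `0` and `1`: for `w = na` or `w = (na)'`
the element `na` lies below both `w` and `w'`, so `w ∧ w' = 0` forces `n = 0`. In an effect
algebra with `S(E) = {0, 1}` an orthogonal family of sharp elements contains `1` at most once
(`1 ⊕ 1` is undefined), so a family it dominates has at most one nonzero member, which is then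
its orthosum. On the other hand every `na` is defined, and the chain `0 < a < 2a < ⋯` has no
supremum: it lies below every `(ma)'`, and `(ma)' < ((m+1)a)'`.
-/

namespace EffectAlgebra

section

variable {E : Type u} (A : EffectAlgebra E)

theorem compl_one : A.compl A.one = A.zero :=
  A.one_max _ (A.D_compl _)

theorem compl_compl (x : E) : A.compl (A.compl x) = x := by
  have hD : A.D (A.compl x) x := A.D_comm _ _ (A.D_compl x)
  refine (A.compl_unique _ _ hD ?_).symm
  rw [A.oplus_comm _ _ hD, A.oplus_compl]

theorem compl_zero : A.compl A.zero = A.one := by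
  rw [← A.compl_one, A.compl_compl]

-- Associativity applied to `(y ⊕ y') ⊕ 0 = 1 ⊕ 0 = 1` shows that `y' ⊕ 0` is a supplement of `y`.
theorem D_zero_right_and_oplus_zero (x : E) : A.D x A.zero ∧ A.oplus x A.zero = x := by
  obtain ⟨y, rfl⟩ : ∃ y, A.compl y = x := ⟨A.compl x, A.compl_compl x⟩
  have hD : A.D (A.oplus y (A.compl y)) A.zero := by
    rw [A.oplus_compl, ← A.compl_one]
    exact A.D_compl _
  obtain ⟨hD₁, hD₂, hassoc⟩ := A.assoc _ _ _ (A.D_compl y) hD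
  refine ⟨hD₁, A.compl_unique _ _ hD₂ ?_⟩
  rw [← hassoc, A.oplus_compl, ← A.compl_one, A.oplus_compl]

theorem D_zero_right (x : E) : A.D x A.zero :=
  (A.D_zero_right_and_oplus_zero x).1

theorem oplus_zero (x : E) : A.oplus x A.zero = x :=
  (A.D_zero_right_and_oplus_zero x).2

theorem D_zero_left (x : E) : A.D A.zero x :=
  A.D_comm _ _ (A.D_zero_right x)

theorem zero_oplus (x : E) : A.oplus A.zero x = x := by
  rw [A.oplus_comm _ _ (A.D_zero_left x), A.oplus_zero]

theorem le_refl (x : E) : A.le x x :=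
  ⟨A.zero, A.D_zero_right x, A.oplus_zero x⟩

theorem zero_le (x : E) : A.le A.zero x :=
  ⟨x, A.D_zero_left x, A.zero_oplus x⟩

theorem eq_zero_of_le_zero {x : E} (h : A.le x A.zero) : x = A.zero := by
  obtain ⟨y, hxy, hsum⟩ := h
  have hD : A.D (A.oplus x y) A.one := by
    rw [hsum]
    exact A.D_zero_left _
  have hy : y = A.zero := A.one_max _ (A.D_comm _ _ (A.assoc _ _ _ hxy hD).1)
  rw [← hsum, hy, A.oplus_zero]

theorem not_D_one_one : ¬ A.D A.one A.one :=
  fun h => A.zero_ne_one (A.one_max _ h).symm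

end

section

variable {E : Type u} {A : EffectAlgebra E} {ι : Type v}

theorem Sharp.eq_zero_of_le_of_le_compl {w y : E} (hw : A.Sharp w) (hyw : A.le y w)
    (hyw' : A.le y (A.compl w)) : y = A.zero := by
  refine A.eq_zero_of_le_zero (hw.2.2 y trivial ?_)
  rintro z (rfl | rfl)
  exacts [hyw, hyw']

theorem SumDef.unique {l : List E} {s₁ s₂ : E} (h₁ : A.SumDef l s₁) (h₂ : A.SumDef l s₂) :
    s₁ = s₂ := by
  induction h₁ generalizing s₂ with
  | nil => cases h₂; rfl
  | cons _ _ ih =>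
    cases h₂ with
    | cons h₂ _ => rw [ih h₂]

theorem Orthogonal.D_of_ne {w : ι → E} (hw : A.Orthogonal w) {i j : ι} (hij : i ≠ j) :
    A.D (w i) (w j) := by
  obtain ⟨s, hs⟩ := hw [i, j] (by simpa using hij)
  simp only [List.map_cons, List.map_nil] at hs
  rcases hs with _ | ⟨_ | ⟨_ | _, -⟩, hD⟩
  rwa [A.oplus_zero] at hD

variable (A) {x : ι → E}

theorem sumDef_map_eq_zero {l : List ι} (h : ∀ k ∈ l, x k = A.zero) :
    A.SumDef (l.map x) A.zero := by
  induction l with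
  | nil => exact .nil
  | cons k t ih =>
    have hs := (ih fun j hj => h j (List.mem_cons_of_mem k hj)).cons (A.D_zero_right (x k))
    rw [A.oplus_zero, h k List.mem_cons_self] at hs
    rwa [List.map_cons, h k List.mem_cons_self]

theorem sumDef_map_of_forall_ne_eq_zero {k₀ : ι} (h : ∀ k ≠ k₀, x k = A.zero) {l : List ι}
    (hl : l.Nodup) (hk₀ : k₀ ∈ l) : A.SumDef (l.map x) (x k₀) := by
  induction l with
  | nil => exact absurd hk₀ List.not_mem_nil
  | cons k t ih =>
    obtain ⟨hkt, ht⟩ := List.nodup_cons.mp hl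
    by_cases hk : k = k₀
    · subst hk
      have hs := (A.sumDef_map_eq_zero fun j hj => h j (ne_of_mem_of_not_mem hj hkt)).cons
        (A.D_zero_right (x k))
      rwa [A.oplus_zero] at hs
    · have hk₀t : k₀ ∈ t := (List.mem_cons.mp hk₀).resolve_left fun e => hk e.symm
      have hs := (ih ht hk₀t).cons (x := x k) (by rw [h k hk]; exact A.D_zero_left _)
      rw [h k hk, A.zero_oplus] at hs
      rwa [List.map_cons, h k hk]

theorem hasOrthoSum_of_forall_ne_eq_zero {k₀ : ι} (h : ∀ k ≠ k₀, x k = A.zero) :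
    A.HasOrthoSum x (x k₀) := by
  classical
  have hsum : ∀ l : List ι, l.Nodup →
      A.SumDef (l.map x) (if k₀ ∈ l then x k₀ else A.zero) := by
    intro l hl
    split_ifs with hk₀
    · exact A.sumDef_map_of_forall_ne_eq_zero h hl hk₀
    · exact A.sumDef_map_eq_zero fun k hk => h k (ne_of_mem_of_not_mem hk hk₀)
  refine ⟨fun l hl => ⟨_, hsum l hl⟩, trivial, ?_, fun z _ hz => hz _ ?_⟩
  · rintro s ⟨l, hl, hs⟩
    rw [hs.unique (hsum l hl)]
    split_ifs
    exacts [A.le_refl _, A.zero_le _]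
  · exact ⟨[k₀], List.nodup_singleton k₀,
      A.sumDef_map_of_forall_ne_eq_zero h (List.nodup_singleton k₀) (List.mem_singleton_self k₀)⟩

theorem hasOrthoSum_zero_of_forall_eq_zero (h : ∀ k, x k = A.zero) :
    A.HasOrthoSum x A.zero := by
  have hsum : ∀ l : List ι, A.SumDef (l.map x) A.zero := fun l =>
    A.sumDef_map_eq_zero fun k _ => h k
  refine ⟨fun l _ => ⟨_, hsum l⟩, trivial, ?_, fun z _ _ => A.zero_le z⟩
  rintro s ⟨l, -, hs⟩
  rw [hs.unique (hsum l)]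
  exact A.le_refl _

theorem exists_hasOrthoSum_of_subsingleton
    (h : ∀ i j, x i ≠ A.zero → x j ≠ A.zero → i = j) : ∃ v, A.HasOrthoSum x v := by
  by_cases hx : ∃ k₀, x k₀ ≠ A.zero
  · obtain ⟨k₀, hk₀⟩ := hx
    exact ⟨x k₀, A.hasOrthoSum_of_forall_ne_eq_zero fun k hk =>
      by_contra fun hxk => hk (h k k₀ hxk hk₀)⟩
  · simp only [not_exists, not_not] at hx
    exact ⟨A.zero, A.hasOrthoSum_zero_of_forall_eq_zero hx⟩

end

theorem sharplyOrthocomplete_of_sharp {E : Type u} (A : EffectAlgebra E)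
    (h : ∀ w, A.Sharp w → w = A.zero ∨ w = A.one) : A.SharplyOrthocomplete := by
  intro ι x w hw horth hxw
  have hw_one : ∀ k, x k ≠ A.zero → w k = A.one := fun k hk =>
    (h _ (hw k)).resolve_left fun hk₀ => hk (A.eq_zero_of_le_zero (hk₀ ▸ hxw k))
  refine A.exists_hasOrthoSum_of_subsingleton fun i j hi hj => by_contra fun hij => ?_
  have hD := horth.D_of_ne hij
  rw [hw_one i hi, hw_one j hj] at hD
  exact A.not_D_one_one hD

/-- `Sum.inl n` encodes `na` and `Sum.inr n` encodes `(na)'`. -/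
structure IsChang (A : EffectAlgebra (ℕ ⊕ ℕ)) : Prop where
  zero_eq : A.zero = Sum.inl 0
  compl_inl : ∀ n, A.compl (Sum.inl n) = Sum.inr n
  D_inl_inl : ∀ m n, A.D (Sum.inl m) (Sum.inl n)
  D_inl_inr : ∀ m n, A.D (Sum.inl m) (Sum.inr n) ↔ m ≤ n
  not_D_inr_inr : ∀ m n, ¬ A.D (Sum.inr m) (Sum.inr n)
  oplus_inl_inl : ∀ m n, A.oplus (Sum.inl m) (Sum.inl n) = Sum.inl (m + n)
  oplus_inl_inr : ∀ m n, m ≤ n → A.oplus (Sum.inl m) (Sum.inr n) = Sum.inr (n - m)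

namespace IsChang

variable {A : EffectAlgebra (ℕ ⊕ ℕ)}

theorem D_inr_inl (hA : A.IsChang) {m n : ℕ} (h : A.D (Sum.inr m) (Sum.inl n)) : n ≤ m :=
  (hA.D_inl_inr n m).mp (A.D_comm _ _ h)

theorem oplus_inr_inl (hA : A.IsChang) {m n : ℕ} (h : n ≤ m) :
    A.oplus (Sum.inr m) (Sum.inl n) = Sum.inr (m - n) := by
  rw [A.oplus_comm _ _ (A.D_comm _ _ ((hA.D_inl_inr n m).mpr h)), hA.oplus_inl_inr n m h]

theorem le_inl_inr (hA : A.IsChang) (m n : ℕ) : A.le (Sum.inl m) (Sum.inr n) := by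
  refine ⟨Sum.inr (n + m), (hA.D_inl_inr _ _).mpr (Nat.le_add_left m n), ?_⟩
  rw [hA.oplus_inl_inr _ _ (Nat.le_add_left m n), Nat.add_sub_cancel]

theorem le_of_inl_le_inl (hA : A.IsChang) {m n : ℕ} (h : A.le (Sum.inl m) (Sum.inl n)) :
    m ≤ n := by
  obtain ⟨z | z, hD, hsum⟩ := h
  · rw [hA.oplus_inl_inl] at hsum
    cases hsum
    exact Nat.le_add_right m z
  · rw [hA.oplus_inl_inr _ _ ((hA.D_inl_inr _ _).mp hD)] at hsum
    cases hsum

theorem le_of_inr_le_inr (hA : A.IsChang) {m n : ℕ} (h : A.le (Sum.inr m) (Sum.inr n)) :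
    n ≤ m := by
  obtain ⟨z | z, hD, hsum⟩ := h
  · rw [hA.oplus_inr_inl (hA.D_inr_inl hD)] at hsum
    cases hsum
    exact Nat.sub_le m z
  · exact absurd hD (hA.not_D_inr_inr m z)

theorem eq_zero_or_eq_one_of_sharp (hA : A.IsChang) {w : ℕ ⊕ ℕ} (hw : A.Sharp w) :
    w = A.zero ∨ w = A.one := by
  cases w with
  | inl n =>
    left
    refine hw.eq_zero_of_le_of_le_compl (A.le_refl _) ?_
    rw [hA.compl_inl]
    exact hA.le_inl_inr n n
  | inr n =>
    right
    have hn : Sum.inl n = A.zero := by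
      refine hw.eq_zero_of_le_of_le_compl (hA.le_inl_inr n n) ?_
      rw [← hA.compl_inl, A.compl_compl]
      exact A.le_refl _
    rw [hA.zero_eq, Sum.inl.injEq] at hn
    rw [hn, ← hA.compl_inl, ← hA.zero_eq, A.compl_zero]

theorem sharplyOrthocomplete (hA : A.IsChang) : A.SharplyOrthocomplete :=
  A.sharplyOrthocomplete_of_sharp fun _ => hA.eq_zero_or_eq_one_of_sharp

theorem not_isSupIn_range_inl (hA : A.IsChang) (s : ℕ ⊕ ℕ) :
    ¬ A.IsSupIn Set.univ (Set.range Sum.inl) s := by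
  rintro ⟨-, hub, hleast⟩
  cases s with
  | inl m => exact Nat.not_succ_le_self m (hA.le_of_inl_le_inl (hub _ ⟨m + 1, rfl⟩))
  | inr m =>
    refine Nat.not_succ_le_self m (hA.le_of_inr_le_inr (hleast (Sum.inr (m + 1)) trivial ?_))
    rintro _ ⟨n, rfl⟩
    exact hA.le_inl_inr n (m + 1)

theorem not_complete (hA : A.IsChang) : ¬ A.Complete := fun h =>
  let ⟨⟨s, hs⟩, _⟩ := h (Set.range Sum.inl)
  hA.not_isSupIn_range_inl s hs

theorem sumDef_replicate_inl (hA : A.IsChang) (k n : ℕ) :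
    A.SumDef (List.replicate n (Sum.inl k)) (Sum.inl (n * k)) := by
  induction n with
  | zero =>
    rw [List.replicate_zero, Nat.zero_mul, ← hA.zero_eq]
    exact .nil
  | succ n ih =>
    have hs := ih.cons (hA.D_inl_inl k (n * k))
    rw [hA.oplus_inl_inl, Nat.add_comm, ← Nat.succ_mul] at hs
    exact hs

theorem not_isArchimedean (hA : A.IsChang) : ¬ A.IsArchimedean := by
  intro h
  obtain ⟨n, hn⟩ := h (Sum.inl 1) (by rw [hA.zero_eq]; simp)
  exact hn ⟨_, hA.sumDef_replicate_inl 1 n⟩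

end IsChang

end EffectAlgebra

theorem stmt13 (A : EffectAlgebra (ℕ ⊕ ℕ))
    (hzero : A.zero = Sum.inl 0)
    (hcompl : ∀ n : ℕ, A.compl (Sum.inl n) = Sum.inr n ∧
      A.compl (Sum.inr n) = Sum.inl n)
    (hD : ∀ x y : ℕ ⊕ ℕ, A.D x y ↔
      (match x, y with
        | Sum.inl _, Sum.inl _ => True
        | Sum.inl m, Sum.inr n => m ≤ n
        | Sum.inr m, Sum.inl n => n ≤ m
        | Sum.inr _, Sum.inr _ => False))
    (hoplus : ∀ m n : ℕ,
      A.oplus (Sum.inl m) (Sum.inl n) = Sum.inl (m + n) ∧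
      (m ≤ n → A.oplus (Sum.inl m) (Sum.inr n) = Sum.inr (n - m)) ∧
      (n ≤ m → A.oplus (Sum.inr m) (Sum.inl n) = Sum.inr (m - n))) :
    A.SharplyOrthocomplete ∧ ¬ A.Complete ∧ ¬ A.IsArchimedean := by
  have hA : A.IsChang :=
    { zero_eq := hzero
      compl_inl := fun n => (hcompl n).1
      D_inl_inl := fun m n => (hD (.inl m) (.inl n)).mpr trivial
      D_inl_inr := fun m n => hD (.inl m) (.inr n)
      not_D_inr_inr := fun m n => (hD (.inr m) (.inr n)).mp
      oplus_inl_inl := fun m n => (hoplus m n).1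
      oplus_inl_inr := fun m n => (hoplus m n).2.1 }
  exact ⟨hA.sharplyOrthocomplete, hA.not_complete, hA.not_isArchimedean⟩
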